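/- Let g : (0,∞) → ℝ be bounded measurable with compact support in (0,∞). Then the kernel k(x,z) = g(x/z)√(x/z)/(1 + |log z|) is square-integrable on (0,∞)×(0,∞) with respect to the product measure (dx/x)(dz/z); consequently the operator A F(x) = ∫_0^∞ k(x,z) F(z) dz/z is Hilbert–Schmidt on L²((0,∞), dx/x). -/

import Mathlib

/-!
Under `x = exp u` the measure `dx/x` becomes Lebesgue measure, so it is invariant under the
dilations `x ↦ x / z`. By Tonelli the `L^p` norm of `(x, z) ↦ h (x / z) * w z` with respect to
`(dx/x)(dz/z)` therefore factors as `‖h‖_p ‖w‖_p`. For `h t = g t * √t` one has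
`∫ |h t|² dt/t = ∫_{t>0} g t ² dt`, finite for bounded compactly supported `g`, and for
`w z = (1 + |log z|)⁻¹` one has `∫ w z ² dz/z = ∫ (1 + |u|)⁻² du < ∞`.
-/

open MeasureTheory

/-- The multiplicative Haar measure `dx/x` on `(0,∞)`. -/
noncomputable def mulHaar : Measure ℝ :=
  (volume.restrict (Set.Ioi (0:ℝ))).withDensity fun x => ENNReal.ofReal x⁻¹

open Real Set
open scoped ENNReal

instance : SFinite mulHaar := by
  unfold mulHaar
  infer_instance

theorem lintegral_mulHaar (f : ℝ → ℝ≥0∞) :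
    ∫⁻ x, f x ∂mulHaar = ∫⁻ x in Ioi 0, ENNReal.ofReal x⁻¹ * f x :=
  lintegral_withDensity_eq_lintegral_mul_non_measurable _ measurable_inv.ennreal_ofReal
    (ae_of_all _ fun _ => ENNReal.ofReal_lt_top) f

theorem lintegral_mulHaar_eq_lintegral_exp (f : ℝ → ℝ≥0∞) :
    ∫⁻ x, f x ∂mulHaar = ∫⁻ u, f (exp u) := by
  rw [lintegral_mulHaar, ← range_exp, ← image_univ,
    lintegral_image_eq_lintegral_abs_deriv_mul MeasurableSet.univ
      (fun u _ => (hasDerivAt_exp u).hasDerivWithinAt) exp_injective.injOn,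
    Measure.restrict_univ]
  refine lintegral_congr fun u => ?_
  rw [abs_of_pos (exp_pos u), ← mul_assoc, ← ENNReal.ofReal_mul (exp_pos u).le,
    mul_inv_cancel₀ (exp_ne_zero u), ENNReal.ofReal_one, one_mul]

theorem ae_mulHaar_pos : ∀ᵐ x ∂mulHaar, 0 < x := by
  have hIic : {x : ℝ | ¬0 < x} = Iic 0 := by ext; simp
  rw [ae_iff, hIic, ← lintegral_indicator_one measurableSet_Iic,
    lintegral_mulHaar_eq_lintegral_exp]
  simp [exp_pos]

theorem lintegral_mulHaar_comp_div (f : ℝ → ℝ≥0∞) {c : ℝ} (hc : 0 < c) :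
    ∫⁻ x, f (x / c) ∂mulHaar = ∫⁻ x, f x ∂mulHaar := by
  simp only [lintegral_mulHaar_eq_lintegral_exp]
  refine Eq.trans ?_ (lintegral_sub_right_eq_self (fun u => f (exp u)) (log c))
  simp only [exp_sub, exp_log hc]

theorem lintegral_mulHaar_prod_comp_div_mul {f w : ℝ → ℝ≥0∞} (hf : Measurable f)
    (hw : Measurable w) :
    ∫⁻ q, f (q.1 / q.2) * w q.2 ∂mulHaar.prod mulHaar
      = (∫⁻ x, f x ∂mulHaar) * ∫⁻ z, w z ∂mulHaar := by
  rw [lintegral_prod_symm' (fun q => f (q.1 / q.2) * w q.2) (by fun_prop),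
    ← lintegral_const_mul _ hw]
  refine lintegral_congr_ae (ae_mulHaar_pos.mono fun z hz => ?_)
  dsimp only
  rw [lintegral_mul_const _ (by fun_prop), lintegral_mulHaar_comp_div f hz]

theorem memLp_mulHaar_prod_comp_div_mul {h w : ℝ → ℝ} {p : ℝ≥0∞} (hp : p ≠ ∞)
    (hhm : Measurable h) (hwm : Measurable w) (hh : MemLp h p mulHaar) (hw : MemLp w p mulHaar) :
    MemLp (fun q : ℝ × ℝ => h (q.1 / q.2) * w q.2) p (mulHaar.prod mulHaar) := by
  have hm : Measurable fun q : ℝ × ℝ => h (q.1 / q.2) * w q.2 := by fun_prop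
  rcases eq_or_ne p 0 with rfl | hp0
  · exact memLp_zero_iff_aestronglyMeasurable.2 hm.aestronglyMeasurable
  refine ⟨hm.aestronglyMeasurable, ?_⟩
  have hh := hh.eLpNorm_lt_top
  have hw := hw.eLpNorm_lt_top
  rw [eLpNorm_lt_top_iff_lintegral_rpow_enorm_lt_top hp0 hp] at hh hw ⊢
  simp only [enorm_mul, ENNReal.mul_rpow_of_nonneg _ _ ENNReal.toReal_nonneg]
  rw [lintegral_mulHaar_prod_comp_div_mul (hhm.enorm.pow_const _) (hwm.enorm.pow_const _)]
  exact ENNReal.mul_lt_top hh hw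

theorem memLp_mulHaar_of_comp_exp {w : ℝ → ℝ} {p : ℝ≥0∞} (hp : p ≠ ∞) (hwm : Measurable w)
    (hw : MemLp (fun u => w (exp u)) p volume) : MemLp w p mulHaar := by
  rcases eq_or_ne p 0 with rfl | hp0
  · exact memLp_zero_iff_aestronglyMeasurable.2 hwm.aestronglyMeasurable
  refine ⟨hwm.aestronglyMeasurable, ?_⟩
  have hw := hw.eLpNorm_lt_top
  rw [eLpNorm_lt_top_iff_lintegral_rpow_enorm_lt_top hp0 hp] at hw ⊢
  rwa [lintegral_mulHaar_eq_lintegral_exp]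

theorem memLp_two_inv_one_add_abs : MemLp (fun u : ℝ => (1 + |u|)⁻¹) 2 volume := by
  refine (memLp_two_iff_integrable_sq (by fun_prop)).2
    (integrable_inv_one_add_sq.mono' (by fun_prop) (ae_of_all _ fun u => ?_))
  rw [Real.norm_of_nonneg (by positivity), inv_pow]
  gcongr
  nlinarith [abs_nonneg u, sq_abs u]

theorem memLp_two_mulHaar_mul_sqrt {g : ℝ → ℝ} (hgm : Measurable g) (hg : MemLp g 2 volume) :
    MemLp (fun x => g x * √x) 2 mulHaar := by
  refine ⟨(hgm.mul continuous_sqrt.measurable).aestronglyMeasurable, ?_⟩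
  have hg := hg.eLpNorm_lt_top
  rw [eLpNorm_lt_top_iff_lintegral_rpow_enorm_lt_top two_ne_zero ENNReal.ofNat_ne_top]
    at hg ⊢
  calc ∫⁻ x, ‖g x * √x‖ₑ ^ (2 : ℝ≥0∞).toReal ∂mulHaar
      = ∫⁻ x in Ioi 0, ‖g x‖ₑ ^ (2 : ℝ≥0∞).toReal := by
        rw [lintegral_mulHaar]
        refine setLIntegral_congr_fun measurableSet_Ioi fun x hx => ?_
        simp only [ENNReal.toReal_ofNat, ENNReal.rpow_two, enorm_mul, mul_pow,
          Real.enorm_eq_ofReal (sqrt_nonneg x), ← ENNReal.ofReal_pow (sqrt_nonneg x),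
          sq_sqrt hx.le]
        rw [mul_left_comm, ← ENNReal.ofReal_mul (inv_nonneg.2 hx.le), inv_mul_cancel₀ hx.ne',
          ENNReal.ofReal_one, mul_one]
    _ ≤ ∫⁻ x, ‖g x‖ₑ ^ (2 : ℝ≥0∞).toReal := setLIntegral_le_lintegral _ _
    _ < ∞ := hg

theorem stmt13_general (g : ℝ → ℝ) (hmeas : Measurable g) (hbd : ∃ M, ∀ x, |g x| ≤ M)
    (hgc : HasCompactSupport g) :
    MemLp (fun p : ℝ × ℝ =>
        g (p.1 / p.2) * Real.sqrt (p.1 / p.2) / (1 + |Real.log p.2|))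
      2 (mulHaar.prod mulHaar) := by
  obtain ⟨M, hM⟩ := hbd
  have hg : MemLp g 2 volume :=
    hgc.memLp_of_bound hmeas.aestronglyMeasurable M (ae_of_all _ hM)
  have hweight : MemLp (fun z => (1 + |log z|)⁻¹) 2 mulHaar :=
    memLp_mulHaar_of_comp_exp ENNReal.ofNat_ne_top (by fun_prop)
      (by simpa only [log_exp] using memLp_two_inv_one_add_abs)
  simpa only [div_eq_mul_inv] using
    memLp_mulHaar_prod_comp_div_mul ENNReal.ofNat_ne_top (by fun_prop) (by fun_prop)
      (memLp_two_mulHaar_mul_sqrt hmeas hg) hweight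

/-- The kernel `g(x/z)√(x/z)/(1+|log z|)` is square-integrable on `(0,∞)²` with respect to
`(dx/x)(dz/z)`; hence the corresponding operator `A` is Hilbert–Schmidt on `L²((0,∞),dx/x)`. -/
theorem stmt13 (g : ℝ → ℝ) (hmeas : Measurable g) (hbd : ∃ M, ∀ x, |g x| ≤ M)
    (hgc : HasCompactSupport g) (hgs : tsupport g ⊆ Set.Ioi 0) :
    MemLp (fun p : ℝ × ℝ =>
        g (p.1 / p.2) * Real.sqrt (p.1 / p.2) / (1 + |Real.log p.2|))
      2 (mulHaar.prod mulHaar) :=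
  stmt13_general g hmeas hbd hgc
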